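/- For a forest T_v of height n rooted at a hypernode v, let (v = x_0, x_1, …, x_n) be the random hypernode sequence produced by Algorithm 2 (the SEI selection process with importance function r), and assume all relevant subtree costs are positive. Then the expected value of α(v, x_1, …, x_n) equals 1, where α(x_0, …, x_n) = ∏_{i=1}^{n} [ r(S(x_{i−1})) / r(x_i) ] · [ Cost(T_{x_i}) / Cost(T_{S(x_{i−1})}) ]. (Paper's Lemma 2.) -/

import Mathlib

open Finset

/-- A finite rooted tree on a finite node type `V`.  The root is its own parent,
every non-root node has a parent whose depth is one smaller, and the root is the
unique node of depth `0`. -/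
structure FinRootedTree (V : Type) [Fintype V] [DecidableEq V] where
  root : V
  parent : V → V
  depth : V → ℕ
  depth_root : depth root = 0
  parent_root : parent root = root
  depth_parent : ∀ v, v ≠ root → depth (parent v) + 1 = depth v
  eq_root_of_depth_zero : ∀ v, depth v = 0 → v = root

namespace FinRootedTree

variable {V : Type} [Fintype V] [DecidableEq V]

/-- The set of children of a node. -/
def children (T : FinRootedTree V) (x : V) : Finset V :=
  Finset.univ.filter fun w => w ≠ T.root ∧ T.parent w = x

/-- `S(v)`: the set of all children of nodes of a hypernode `v`. -/
def succs (T : FinRootedTree V) (v : Finset V) : Finset V :=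
  v.biUnion T.children

/-- The set of nodes of the subtree rooted at `x` (the descendants of `x`,
including `x` itself). -/
def desc (T : FinRootedTree V) (x : V) : Finset V :=
  Finset.univ.filter fun w =>
    x ∈ (Finset.range (T.depth w + 1)).image fun k => T.parent^[k] w

/-- `Cost(T_x)`: the total cost of the subtree rooted at `x`. -/
noncomputable def subtreeCost (T : FinRootedTree V) (c : V → ℝ) (x : V) : ℝ :=
  ∑ w ∈ T.desc x, c w

/-- `Cost(T_v)`: the total cost of the forest rooted at the hypernode `v`. -/
noncomputable def forestCost (T : FinRootedTree V) (c : V → ℝ) (v : Finset V) : ℝ :=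
  ∑ x ∈ v, T.subtreeCost c x

/-- `H(v)`: the hyperchildren of `v` for budget `B`, i.e. the subsets of `S(v)`
of size `min B |S(v)|`. -/
def hyper (T : FinRootedTree V) (B : ℕ) (v : Finset V) : Finset (Finset V) :=
  (T.succs v).powersetCard (min B (T.succs v).card)

/-- A hypernode: a nonempty set of distinct nodes, all at the same depth. -/
def IsHypernode (T : FinRootedTree V) (v : Finset V) : Prop :=
  v.Nonempty ∧ ∀ a ∈ v, ∀ b ∈ v, T.depth a = T.depth b

/-- The set of all complete hypernode sequences `(x_1, …)` that can occur after
`x_0 = v` in the SEI selection process (each `x_{i+1} ∈ H(x_i)`, stopping at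
the terminal position `S(x_k) = ∅`), given enough fuel. -/
def seqs (T : FinRootedTree V) (B : ℕ) : ℕ → Finset V → Finset (List (Finset V))
  | 0, _ => {[]}
  | fuel + 1, v =>
      if T.succs v = ∅ then {[]}
      else (T.hyper B v).biUnion fun w => (seqs T B fuel w).image fun l => w :: l

/-- The probability that the SEI selection process started at `v` produces the
hypernode sequence `l`. -/
noncomputable def seqProb (T : FinRootedTree V) (r : V → ℝ) :
    Finset V → List (Finset V) → ℝ
  | _, [] => 1
  | v, w :: l =>
      ((∑ a ∈ w, r a) /
          ((∑ a ∈ T.succs v, r a) *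
            ((((T.succs v).card - 1).choose (w.card - 1) : ℕ) : ℝ))) *
        seqProb T r w l

/-- `α(x_0, x_1, …, x_n) = ∏_{i=1}^n (r(S(x_{i-1}))/r(x_i)) * (Cost(T_{x_i})/Cost(T_{S(x_{i-1})}))`,
for the sequence starting at `v` and continuing along the list `l`. -/
noncomputable def alphaSeq (T : FinRootedTree V) (c r : V → ℝ) :
    Finset V → List (Finset V) → ℝ
  | _, [] => 1
  | v, w :: l =>
      ((∑ a ∈ T.succs v, r a) / (∑ a ∈ w, r a)) *
        (T.forestCost c w / T.forestCost c (T.succs v)) * alphaSeq T c r w l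

/-!
The weight `α` exactly undoes the sampling bias of each step. If `S = S(x_k)` and `m = |x_{k+1}|`,
then `P(x_{k+1} = w) · (r(S) / r(w)) · (Cost(T_w) / Cost(T_S)) = Cost(T_w) / (C(|S|-1, m-1) · Cost(T_S))`,
and since every node of `S` lies in exactly `C(|S|-1, m-1)` of the `m`-subsets of `S`, these one-step
factors sum to `1` over `H(x_k)`. Induction on the fuel of `seqs` then gives the identity for
every fuel, not only for one exceeding the height of the forest.
-/

theorem _root_.Finset.card_filter_mem_powersetCard {α : Type*} [DecidableEq α] {s : Finset α}
    {a : α} (ha : a ∈ s) {k : ℕ} (hk : 1 ≤ k) :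
    #{t ∈ s.powersetCard k | a ∈ t} = (#s - 1).choose (k - 1) := by
  simpa using card_filter_powersetCard_subset {a} s k (by simpa) (by simpa)

theorem _root_.Finset.sum_powersetCard_sum {α M : Type*} [DecidableEq α] [AddCommMonoid M]
    (s : Finset α) {k : ℕ} (hk : 1 ≤ k) (f : α → M) :
    ∑ t ∈ s.powersetCard k, ∑ a ∈ t, f a = (#s - 1).choose (k - 1) • ∑ a ∈ s, f a := by
  rw [Finset.sum_comm' (t' := s) (s' := fun a => {t ∈ s.powersetCard k | a ∈ t})
    fun t a => by
      simp only [mem_filter, mem_powersetCard]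
      exact ⟨fun h => ⟨h, h.1.1 h.2⟩, fun h => h.1⟩]
  rw [smul_sum]
  refine sum_congr rfl fun a ha => ?_
  rw [sum_const, card_filter_mem_powersetCard ha hk]

theorem _root_.List.pairwiseDisjoint_image_cons {α : Type*} [DecidableEq α] (s : Set α)
    (f : α → Finset (List α)) :
    s.PairwiseDisjoint fun a => (f a).image (a :: ·) := by
  intro a _ b _ hab
  simp only [Function.onFun, disjoint_left, mem_image]
  rintro _ ⟨l, _, rfl⟩ ⟨l', _, hl'⟩
  exact hab (List.cons_eq_cons.mp hl').1.symm

variable (T : FinRootedTree V)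

theorem seqs_succ_of_succs_ne_empty (B n : ℕ) {v : Finset V} (hv : T.succs v ≠ ∅) :
    T.seqs B (n + 1) v = (T.hyper B v).biUnion fun w => (T.seqs B n w).image (w :: ·) := by
  rw [seqs, if_neg hv]

theorem sum_hyper_forestCost (c : V → ℝ) {B : ℕ} (hB : 1 ≤ B) {v : Finset V}
    (hv : (T.succs v).Nonempty) :
    ∑ w ∈ T.hyper B v, T.forestCost c w =
      ((#(T.succs v) - 1).choose (min B #(T.succs v) - 1) : ℕ) * T.forestCost c (T.succs v) := by
  rw [hyper, ← nsmul_eq_mul]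
  exact sum_powersetCard_sum _ (le_min hB hv.card_pos) _

theorem seqProb_cons_mul_alphaSeq_cons (c r : V → ℝ) {v w : Finset V} (l : List (Finset V))
    (hrS : ∑ a ∈ T.succs v, r a ≠ 0) (hrw : ∑ a ∈ w, r a ≠ 0) :
    seqProb T r v (w :: l) * alphaSeq T c r v (w :: l) =
      T.forestCost c w /
          (((#(T.succs v) - 1).choose (#w - 1) : ℕ) * T.forestCost c (T.succs v)) *
        (seqProb T r w l * alphaSeq T c r w l) := by
  rw [seqProb, alphaSeq]
  field_simp

theorem sum_seqProb_mul_alphaSeq (c : V → ℝ) (hpos : ∀ x : V, 0 < T.subtreeCost c x)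
    {B : ℕ} (hB : 1 ≤ B) (r : V → ℝ) (hr : ∀ x : V, 0 < r x) (n : ℕ) (v : Finset V) :
    ∑ l ∈ T.seqs B n v, seqProb T r v l * alphaSeq T c r v l = 1 := by
  induction n generalizing v with
  | zero => simp [seqs, seqProb, alphaSeq]
  | succ n ih =>
    by_cases hS : T.succs v = ∅
    · simp [seqs, hS, seqProb, alphaSeq]
    set S := T.succs v
    have hSne : S.Nonempty := nonempty_iff_ne_empty.mpr hS
    set C : ℝ := (((#S - 1).choose (min B #S - 1) : ℕ) : ℝ)
    have hC : C ≠ 0 :=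
      Nat.cast_ne_zero.mpr (Nat.choose_pos (Nat.sub_le_sub_right (min_le_right _ _) 1)).ne'
    have hcostS : T.forestCost c S ≠ 0 := (sum_pos (fun x _ => hpos x) hSne).ne'
    have hstep : ∀ w ∈ T.hyper B v,
        ∑ l ∈ (T.seqs B n w).image (w :: ·), seqProb T r v l * alphaSeq T c r v l =
          T.forestCost c w / (C * T.forestCost c S) := by
      intro w hw
      obtain ⟨-, hwk⟩ := mem_powersetCard.mp hw
      have hwne : w.Nonempty := card_pos.mp (hwk ▸ le_min hB hSne.card_pos)
      rw [sum_image fun _ _ _ _ h => List.cons_injective h, ← mul_one (T.forestCost c w / _),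
        ← ih w, mul_sum]
      refine sum_congr rfl fun l _ => ?_
      rw [seqProb_cons_mul_alphaSeq_cons T c r l (sum_pos (fun x _ => hr x) hSne).ne'
        (sum_pos (fun x _ => hr x) hwne).ne', hwk]
    rw [seqs_succ_of_succs_ne_empty T B n hS,
      sum_biUnion (List.pairwiseDisjoint_image_cons _ _), sum_congr rfl hstep, ← sum_div,
      sum_hyper_forestCost T c hB hSne]
    exact div_self (mul_ne_zero hC hcostS)

theorem alpha_expectation_general (T : FinRootedTree V) (c : V → ℝ)
    (hpos : ∀ x : V, 0 < T.subtreeCost c x)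
    (B : ℕ) (hB : 1 ≤ B) (r : V → ℝ) (hr : ∀ x : V, 0 < r x)
    (v : Finset V) :
    (∑ l ∈ seqs T B (Fintype.card V) v,
      seqProb T r v l * alphaSeq T c r v l) = 1 :=
  T.sum_seqProb_mul_alphaSeq c hpos hB r hr (Fintype.card V) v

/-- Paper's Lemma 2: the expected value of `α(v, x_1, …, x_n)` over the random
hypernode sequence produced by the SEI selection process equals `1`. -/
theorem alpha_expectation (T : FinRootedTree V) (c : V → ℝ) (hc : ∀ x, 0 ≤ c x)
    (hpos : ∀ x : V, 0 < T.subtreeCost c x)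
    (B : ℕ) (hB : 1 ≤ B) (r : V → ℝ) (hr : ∀ x : V, 0 < r x)
    (v : Finset V) (hv : T.IsHypernode v) :
    (∑ l ∈ seqs T B (Fintype.card V) v,
      seqProb T r v l * alphaSeq T c r v l) = 1 :=
  alpha_expectation_general T c hpos B hB r hr v

end FinRootedTree
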